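/- Ground state transform identity: if h(x) = |x|^λ with λ > -(N-2)/2 and κ = -λ² - (N-2)λ, then for every φ ∈ C_c^∞(ℝ^N \ {0}), ∫(|∇(hφ)|² - (κ/|x|²)h²φ²)dx = ∫ h²|∇φ|² dx. -/

import Mathlib

open MeasureTheory InnerProductSpace

section aux

variable {E : Type*} [NormedAddCommGroup E] [InnerProductSpace ℝ E]

private lemma gst_sq_rpow_half (t : ℝ) (ht : 0 ≤ t) (r : ℝ) : (t ^ 2) ^ (r / 2) = t ^ r := by
  rw [← Real.rpow_natCast t 2, ← Real.rpow_mul ht]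
  congr 1; ring

private lemma gst_hasFDerivAt_norm_rpow {x : E} (hx : x ≠ 0) (r : ℝ) :
    HasFDerivAt (fun y : E => ‖y‖ ^ r) ((r * ‖x‖ ^ (r - 2)) • (innerSL ℝ x)) x := by
  have hnx : (0:ℝ) < ‖x‖ := norm_pos_iff.mpr hx
  have h1 : HasFDerivAt (fun y : E => ‖y‖ ^ 2) (2 • (innerSL ℝ x)) x :=
    (hasFDerivAt_id x).norm_sq.congr_fderiv (by ext y; simp)
  have h2 : HasDerivAt (fun t : ℝ => t ^ (r / 2)) ((r/2) * (‖x‖^2) ^ (r/2 - 1)) (‖x‖^2) :=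
    Real.hasDerivAt_rpow_const (Or.inl (by positivity))
  have h3 := h2.comp_hasFDerivAt x h1
  have he : (fun y : E => ‖y‖ ^ r) = (fun t : ℝ => t ^ (r/2)) ∘ (fun y : E => ‖y‖ ^ 2) := by
    funext y; simp [Function.comp, gst_sq_rpow_half _ (norm_nonneg y)]
  rw [he]
  refine h3.congr_fderiv ?_
  have : ((‖x‖^2) : ℝ) ^ (r/2 - 1) = ‖x‖ ^ (r - 2) := by
    rw [← Real.rpow_natCast ‖x‖ 2, ← Real.rpow_mul hnx.le]
    congr 1; ring
  ext y
  simp [this]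
  ring

private lemma gst_contDiffAt_norm_rpow {x : E} (hx : x ≠ 0) (r : ℝ) :
    ContDiffAt ℝ 1 (fun y : E => ‖y‖ ^ r) x := by
  have he : (fun y : E => ‖y‖ ^ r) = (fun t : ℝ => t ^ (r/2)) ∘ (fun y : E => ‖y‖ ^ 2) := by
    funext y; simp [Function.comp, gst_sq_rpow_half _ (norm_nonneg y)]
  rw [he]
  have hnx : (0:ℝ) < ‖x‖ := norm_pos_iff.mpr hx
  exact (Real.contDiffAt_rpow_const_of_ne (by positivity)).comp x
    (contDiff_norm_sq ℝ).contDiffAt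

end aux

private lemma gst_integral_deriv_coord_eq_zero {N : ℕ} (V : EuclideanSpace ℝ (Fin N) → ℝ)
    (hV : ContDiff ℝ 1 V) (hVc : HasCompactSupport V) (v : EuclideanSpace ℝ (Fin N)) :
    ∫ x, fderiv ℝ V x v = 0 := by
  obtain ⟨C, hC⟩ := hV.lipschitzWith_of_hasCompactSupport hVc one_ne_zero
  have hf : LipschitzWith 0 (fun _ : EuclideanSpace ℝ (Fin N) => (1:ℝ)) := LipschitzWith.const _
  have key := hf.integral_lineDeriv_mul_eq hC hVc (-v) (μ := volume)
  simp only [mul_one, neg_neg] at key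
  have h2 : ∀ x, lineDeriv ℝ V x v = fderiv ℝ V x v := fun x =>
    ((hV.differentiable one_ne_zero x).hasFDerivAt.hasLineDerivAt v).lineDeriv
  simp_rw [← h2]
  rw [← key]
  have h3 : ∀ x : EuclideanSpace ℝ (Fin N), lineDeriv ℝ (fun _ => (1:ℝ)) x (-v) = 0 := by
    intro x; simp [lineDeriv]
  simp [h3]

/-- Vector decomposition in Euclidean space: for a continuous linear functional `D`,
`∑ i, D eᵢ * xᵢ = D x`. -/
private lemma gst_sum_apply {N : ℕ} (D : EuclideanSpace ℝ (Fin N) →L[ℝ] ℝ)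
    (x : EuclideanSpace ℝ (Fin N)) :
    ∑ i, D (EuclideanSpace.single i 1) * x i = D x := by
  have hx : (∑ i, x i • EuclideanSpace.single i (1:ℝ)) = x := by
    ext j
    rw [show (∑ i, x i • EuclideanSpace.single i (1:ℝ)) j
        = ∑ i, (x i • EuclideanSpace.single i (1:ℝ)) j by rw [WithLp.ofLp_sum, Finset.sum_apply]]
    simp [EuclideanSpace.single_apply]
  conv_rhs => rw [← hx]
  rw [map_sum]
  refine Finset.sum_congr rfl fun i _ => ?_
  rw [_root_.map_smul]
  simp [mul_comm]

private lemma gst_integral_divergence_eq_zero {N : ℕ}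
    (V : EuclideanSpace ℝ (Fin N) → EuclideanSpace ℝ (Fin N))
    (hV : ContDiff ℝ 1 V) (hVc : HasCompactSupport V) :
    ∫ x, ∑ i, fderiv ℝ V x (EuclideanSpace.single i 1) i = 0 := by
  have hVi : ∀ i, ContDiff ℝ 1 (fun x => V x i) := fun i =>
    (EuclideanSpace.proj (𝕜 := ℝ) i).contDiff.comp (f := V) hV
  have hVci : ∀ i, HasCompactSupport (fun x => V x i) := fun i =>
    hVc.comp_left (g := fun y : EuclideanSpace ℝ (Fin N) => y i) rfl
  have hfd : ∀ i x v, fderiv ℝ (fun x => V x i) x v = (fderiv ℝ V x v) i := by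
    intro i x v
    have := ((EuclideanSpace.proj (𝕜 := ℝ) i).hasFDerivAt.comp x
      (hV.differentiable one_ne_zero x).hasFDerivAt).fderiv
    rw [show (fun x => V x i) = (EuclideanSpace.proj (𝕜 := ℝ) i) ∘ V from rfl, this]
    rfl
  have hint : ∀ i : Fin N, Integrable
      (fun x => fderiv ℝ V x (EuclideanSpace.single i 1) i) volume := by
    intro i
    simp_rw [← hfd]
    refine Continuous.integrable_of_hasCompactSupport ?_ ?_
    · exact ((hVi i).continuous_fderiv one_ne_zero).clm_apply continuous_const
    · refine HasCompactSupport.mono ((hVci i).fderiv ℝ) ?_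
      intro x hx
      simp only [Function.mem_support, ne_eq] at hx ⊢
      intro h0
      exact hx (by rw [h0]; rfl)
  rw [integral_finset_sum _ (fun i _ => hint i)]
  refine Finset.sum_eq_zero fun i _ => ?_
  simp_rw [← hfd]
  exact gst_integral_deriv_coord_eq_zero _ (hVi i) (hVci i) _

section aux2
variable {E : Type*} [NormedAddCommGroup E] [InnerProductSpace ℝ E]

private lemma gst_norm_expand (a b : ℝ) (u x : E) :
    ‖a • u + b • x‖ ^ 2 = a^2 * ‖u‖^2 + 2 * a * b * (inner ℝ u x : ℝ) + b^2 * ‖x‖^2 := by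
  rw [← real_inner_self_eq_norm_sq]
  simp only [inner_add_left, inner_add_right, real_inner_smul_left, real_inner_smul_right]
  rw [real_inner_self_eq_norm_sq, real_inner_self_eq_norm_sq, real_inner_comm x u]
  ring

private lemma gst_gradient_eq_zero [CompleteSpace E] {f : E → ℝ} {x : E}
    (hf : fderiv ℝ f x = 0) : gradient f x = 0 := by
  unfold gradient
  rw [hf]
  simp

end aux2

open RealInnerProductSpace

/-- Ground state transform identity for `h(x) = |x|^λ`. -/
theorem stmt4 (N : ℕ) (hN : 3 ≤ N) (l κ : ℝ)
    (hl : -(((N : ℝ) - 2) / 2) < l) (hκ : κ = -l ^ 2 - ((N : ℝ) - 2) * l)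
    (h : EuclideanSpace ℝ (Fin N) → ℝ) (hh : ∀ x, h x = ‖x‖ ^ l)
    (φ : EuclideanSpace ℝ (Fin N) → ℝ)
    (hφ : ContDiff ℝ (⊤ : ℕ∞) φ) (hφc : HasCompactSupport φ) (hφs : tsupport φ ⊆ {x | x ≠ 0}) :
    ∫ x, (‖gradient (fun y => h y * φ y) x‖ ^ 2 - (κ / ‖x‖ ^ 2) * (h x) ^ 2 * (φ x) ^ 2)
      = ∫ x, (h x) ^ 2 * ‖gradient φ x‖ ^ 2 := by
  have hhfun : h = fun y : EuclideanSpace ℝ (Fin N) => ‖y‖ ^ l := funext hh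
  subst hhfun
  beta_reduce
  subst hκ
  set κ : ℝ := -l ^ 2 - ((N : ℝ) - 2) * l with hκ
  -- basic facts
  have hopen : IsOpen (tsupport φ)ᶜ := (isClosed_tsupport φ).isOpen_compl
  have hφd : Differentiable ℝ φ := hφ.differentiable (by simp)
  have hφ1 : ContDiff ℝ 1 φ := hφ.of_le (by simp)
  have hφ0 : ∀ x ∉ tsupport φ, φ x = 0 := fun x hx => image_eq_zero_of_notMem_tsupport hx
  -- the vector field
  set V : EuclideanSpace ℝ (Fin N) → EuclideanSpace ℝ (Fin N) :=
    fun y => ((l * φ y ^ 2) * ‖y‖ ^ (2*l - 2)) • y with hVdef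
  have hVzero : ∀ y ∉ tsupport φ, V y = 0 := by
    intro y hy; simp [hVdef, hφ0 y hy]
  have hsuppV : Function.support V ⊆ Function.support φ := by
    intro x hx
    simp only [Function.mem_support, ne_eq] at hx ⊢
    intro h0
    exact hx (by simp [hVdef, h0])
  have hVc : HasCompactSupport V := hφc.mono hsuppV
  have hV1 : ContDiff ℝ 1 V := by
    rw [contDiff_iff_contDiffAt]
    intro x
    by_cases hx : x ∈ tsupport φ
    · have hx0 : x ≠ 0 := hφs hx
      exact ((contDiffAt_const.mul ((hφ1.pow 2).contDiffAt)).mul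
        (gst_contDiffAt_norm_rpow hx0 (2*l-2))).smul contDiffAt_id
    · have hev : V =ᶠ[nhds x] (fun _ => 0) :=
        Filter.eventuallyEq_of_mem (hopen.mem_nhds hx) (fun y hy => hVzero y hy)
      exact contDiffAt_const.congr_of_eventuallyEq hev
  -- pointwise claim
  have claim : ∀ x, ‖gradient (fun y => (‖y‖ ^ l) * φ y) x‖ ^ 2
      - (κ / ‖x‖ ^ 2) * (‖x‖ ^ l) ^ 2 * (φ x) ^ 2
      = (‖x‖ ^ l) ^ 2 * ‖gradient φ x‖ ^ 2
        + ∑ i, fderiv ℝ V x (EuclideanSpace.single i 1) i := by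
    intro x
    by_cases hx : x ∈ tsupport φ
    case neg =>
      have hmem := hopen.mem_nhds hx
      have hφx : φ x = 0 := hφ0 x hx
      have h1 : gradient (fun y => (‖y‖ ^ l) * φ y) x = 0 := by
        apply gst_gradient_eq_zero
        have hev : (fun y => (‖y‖ ^ l) * φ y) =ᶠ[nhds x] (fun _ => (0:ℝ)) :=
          Filter.eventuallyEq_of_mem hmem (fun y hy => by simp [hφ0 y hy])
        rw [hev.fderiv_eq]
        exact fderiv_const_apply 0
      have h2 : gradient φ x = 0 := by
        apply gst_gradient_eq_zero
        have hev : φ =ᶠ[nhds x] (fun _ => (0:ℝ)) :=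
          Filter.eventuallyEq_of_mem hmem (fun y hy => hφ0 y hy)
        rw [hev.fderiv_eq]
        exact fderiv_const_apply 0
      have h3 : fderiv ℝ V x = 0 := by
        have hev : V =ᶠ[nhds x] (fun _ => 0) :=
          Filter.eventuallyEq_of_mem hmem (fun y hy => hVzero y hy)
        rw [hev.fderiv_eq]
        exact fderiv_const_apply 0
      simp [h1, h2, h3, hφx]
    case pos =>
      have hx0 : x ≠ 0 := hφs hx
      have hr : (0:ℝ) < ‖x‖ := norm_pos_iff.mpr hx0
      set r := ‖x‖ with hrdef
      set u := gradient φ x with hudef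
      set P := φ x with hPdef
      set B := r ^ (l - 2) with hBdef
      have hDφ : HasFDerivAt φ (toDual ℝ (EuclideanSpace ℝ (Fin N)) u) x :=
        hasGradientAt_iff_hasFDerivAt.mp (hφd x).hasGradientAt
      have hDh : HasFDerivAt (fun y : EuclideanSpace ℝ (Fin N) => ‖y‖ ^ l)
          ((l * B) • innerSL ℝ x) x := gst_hasFDerivAt_norm_rpow hx0 l
      have hDhφ := hDh.mul hDφ
      have hgradhφ : gradient (fun y => ‖y‖ ^ l * φ y) x
          = (r ^ l) • u + (P * (l * B)) • x := by
        refine HasGradientAt.gradient ?_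
        rw [hasGradientAt_iff_hasFDerivAt]
        refine hDhφ.congr_fderiv ?_
        ext y
        simp [inner_add_left, real_inner_smul_left]
        ring
      have hnorm : ‖(r ^ l) • u + (P * (l * B)) • x‖ ^ 2
          = (r^l)^2 * ‖u‖^2 + 2 * (r^l) * (P * (l*B)) * ⟪u, x⟫
            + (P*(l*B))^2 * r^2 := gst_norm_expand _ _ u x
      set a₁ := (l * P^2) * ((2*l-2) * r ^ (2*l-2-2)) with ha1
      set a₂ := r^(2*l-2) * (l * (2 * P)) with ha2
      set D₀ : EuclideanSpace ℝ (Fin N) →L[ℝ] ℝ :=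
        a₁ • innerSL ℝ x + a₂ • toDual ℝ (EuclideanSpace ℝ (Fin N)) u with hD0
      have hDc : HasFDerivAt (fun y => (l * φ y ^ 2) * ‖y‖ ^ (2*l-2)) D₀ x := by
        have h1 : HasFDerivAt (fun y => l * φ y ^ 2)
            ((l * (2 * P)) • toDual ℝ (EuclideanSpace ℝ (Fin N)) u) x := by
          have heq : (fun y => l * φ y ^ 2)
              = fun y : EuclideanSpace ℝ (Fin N) => l * (φ y * φ y) := by
            funext y; ring
          rw [heq]
          have h0 := (hDφ.mul hDφ).const_mul l
          refine h0.congr_fderiv ?_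
          ext y
          simp
          ring
        have h2 := gst_hasFDerivAt_norm_rpow hx0 (2*l-2)
        have h3 := h1.mul h2
        refine h3.congr_fderiv ?_
        ext y
        simp [hD0]
        ring
      have hDV : HasFDerivAt V
          (((l * P ^ 2) * r^(2*l-2)) • ContinuousLinearMap.id ℝ (EuclideanSpace ℝ (Fin N))
            + D₀.smulRight x) x := hDc.smul (hasFDerivAt_id x)
      have hdiv : ∑ i, fderiv ℝ V x (EuclideanSpace.single i 1) i
          = (N:ℝ) * ((l * P ^ 2) * r^(2*l-2)) + (a₁ * r^2 + a₂ * ⟪u, x⟫) := by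
        rw [hDV.fderiv]
        have heach : ∀ i : Fin N,
            ((((l * P ^ 2) * r^(2*l-2)) • ContinuousLinearMap.id ℝ (EuclideanSpace ℝ (Fin N))
              + D₀.smulRight x) (EuclideanSpace.single i 1)) i
            = ((l * P ^ 2) * r^(2*l-2)) * (EuclideanSpace.single i (1:ℝ) i)
              + D₀ (EuclideanSpace.single i 1) * x i := by
          intro i
          simp [PiLp.add_apply, PiLp.smul_apply, smul_eq_mul]
        simp_rw [heach]
        rw [Finset.sum_add_distrib, gst_sum_apply D₀ x]
        have hsingle : ∀ i : Fin N, EuclideanSpace.single i (1:ℝ) i = 1 := by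
          simp [EuclideanSpace.single_apply]
        simp_rw [hsingle, mul_one]
        rw [Finset.sum_const, Finset.card_univ, Fintype.card_fin]
        have hD0x : D₀ x = a₁ * r^2 + a₂ * ⟪u, x⟫ := by
          rw [hD0]
          simp only [ContinuousLinearMap.add_apply, ContinuousLinearMap.coe_smul',
            Pi.smul_apply, innerSL_apply_apply, toDual_apply_apply, smul_eq_mul]
          rw [real_inner_self_eq_norm_sq]
        rw [hD0x, nsmul_eq_mul]
      have f1 : r ^ l = B * r ^ 2 := by
        rw [hBdef, ← Real.rpow_natCast r 2, ← Real.rpow_add hr]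
        congr 1; ring
      have f2 : r ^ (2*l-2) = B * B * r ^ 2 := by
        rw [hBdef, ← Real.rpow_natCast r 2, ← Real.rpow_add hr, ← Real.rpow_add hr]
        congr 1; ring
      have f3 : r ^ (2*l-2-2) = B * B := by
        rw [hBdef, ← Real.rpow_add hr]
        congr 1; ring
      rw [hgradhφ, hnorm, hdiv, ha1, ha2, f1, f2, f3, hκ]
      have hr2 : r ^ 2 ≠ 0 := by positivity
      field_simp
      ring
  -- gradient is continuous
  have hgradcont : Continuous (fun x => gradient φ x) := by
    have h1 : Continuous (fderiv ℝ φ) := hφ.continuous_fderiv (by simp)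
    exact (toDual ℝ (EuclideanSpace ℝ (Fin N))).symm.continuous.comp h1
  have hgrad0 : ∀ x ∉ tsupport φ, gradient φ x = 0 := by
    intro x hx
    apply gst_gradient_eq_zero
    have hev : φ =ᶠ[nhds x] (fun _ => (0:ℝ)) :=
      Filter.eventuallyEq_of_mem (hopen.mem_nhds hx) (fun y hy => hφ0 y hy)
    rw [hev.fderiv_eq]
    exact fderiv_const_apply 0
  -- integrability of RHS integrand
  have hF2int : Integrable (fun x : EuclideanSpace ℝ (Fin N) =>
      (‖x‖ ^ l) ^ 2 * ‖gradient φ x‖ ^ 2) volume := by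
    refine Continuous.integrable_of_hasCompactSupport ?_ ?_
    · rw [continuous_iff_continuousAt]
      intro x
      by_cases hx : x ∈ tsupport φ
      · have hx0 : x ≠ 0 := hφs hx
        exact (((gst_contDiffAt_norm_rpow hx0 l).continuousAt.pow 2).mul
          ((hgradcont.norm.pow 2).continuousAt))
      · have hev : (fun x : EuclideanSpace ℝ (Fin N) =>
            (‖x‖ ^ l) ^ 2 * ‖gradient φ x‖ ^ 2) =ᶠ[nhds x] (fun _ => 0) :=
          Filter.eventuallyEq_of_mem (hopen.mem_nhds hx)
            (fun y hy => by simp [hgrad0 y hy])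
        exact continuousAt_const.congr hev.symm
    · refine hφc.mono' ?_
      intro x hx
      simp only [Function.mem_support, ne_eq] at hx
      by_contra hxs
      exact hx (by simp [hgrad0 x hxs])
  -- integrability of divergence
  have hF3cont : Continuous (fun x => ∑ i, fderiv ℝ V x (EuclideanSpace.single i 1) i) := by
    refine continuous_finset_sum _ fun i _ => ?_
    exact (EuclideanSpace.proj (𝕜 := ℝ) i).continuous.comp
      ((hV1.continuous_fderiv one_ne_zero).clm_apply continuous_const)
  have hF3c : HasCompactSupport
      (fun x => ∑ i, fderiv ℝ V x (EuclideanSpace.single i 1) i) := by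
    refine (hVc.fderiv ℝ).mono ?_
    intro x hx
    simp only [Function.mem_support, ne_eq] at hx ⊢
    intro h0
    exact hx (by rw [h0]; simp)
  have hF3int := hF3cont.integrable_of_hasCompactSupport (μ := volume) hF3c
  calc ∫ x, (‖gradient (fun y => (‖y‖ ^ l) * φ y) x‖ ^ 2
        - (κ / ‖x‖ ^ 2) * (‖x‖ ^ l) ^ 2 * (φ x) ^ 2)
      = ∫ x, ((‖x‖ ^ l) ^ 2 * ‖gradient φ x‖ ^ 2
          + ∑ i, fderiv ℝ V x (EuclideanSpace.single i 1) i) :=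
        integral_congr_ae (Filter.Eventually.of_forall claim)
    _ = (∫ x, (‖x‖ ^ l) ^ 2 * ‖gradient φ x‖ ^ 2)
          + ∫ x, ∑ i, fderiv ℝ V x (EuclideanSpace.single i 1) i :=
        integral_add hF2int hF3int
    _ = ∫ x, (‖x‖ ^ l) ^ 2 * ‖gradient φ x‖ ^ 2 := by
        rw [gst_integral_divergence_eq_zero V hV1 hVc, add_zero]
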